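/- Let G and H be nontrivial connected graphs such that G has no isolatable vertex. If G × H is well-covered, then G is a regular graph of degree n(G)/α(G) − 1. -/

import Mathlib

/-- The direct (tensor) product of two simple graphs. -/
def directProd {V W : Type*} (G : SimpleGraph V) (H : SimpleGraph W) :
    SimpleGraph (V × W) where
  Adj x y := G.Adj x.1 y.1 ∧ H.Adj x.2 y.2
  symm := ⟨fun x y h => ⟨h.1.symm, h.2.symm⟩⟩
  loopless := ⟨fun x h => G.loopless.irrefl x.1 h.1⟩

/-- `s` is an independent set of `G`. -/
def IsIndep {V : Type*} (G : SimpleGraph V) (s : Set V) : Prop :=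
  ∀ ⦃u⦄, u ∈ s → ∀ ⦃v⦄, v ∈ s → ¬ G.Adj u v

/-- `s` is a maximal independent set of `G`. -/
def IsMaxIndep {V : Type*} (G : SimpleGraph V) (s : Set V) : Prop :=
  IsIndep G s ∧ ∀ t, IsIndep G t → s ⊆ t → s = t

/-- A graph is well-covered if all maximal independent sets have the same cardinality. -/
def WellCovered {V : Type*} (G : SimpleGraph V) : Prop :=
  ∀ s t, IsMaxIndep G s → IsMaxIndep G t → s.ncard = t.ncard

/-- The independence number of `G`. -/
noncomputable def indepNum {V : Type*} (G : SimpleGraph V) : ℕ :=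
  sSup {n | ∃ s, IsIndep G s ∧ s.ncard = n}

/-- The independent domination number of `G`: the minimum size of a maximal independent set. -/
noncomputable def iNum {V : Type*} (G : SimpleGraph V) : ℕ :=
  sInf {n | ∃ s, IsMaxIndep G s ∧ s.ncard = n}

/-- The closed neighborhood `N[s]` of a set of vertices. -/
def closedNbhd {V : Type*} (G : SimpleGraph V) (s : Set V) : Set V :=
  s ∪ {v | ∃ u ∈ s, G.Adj u v}

/-- `G` has no isolated vertices. -/
def NoIsolated {V : Type*} (G : SimpleGraph V) : Prop := ∀ v, ∃ u, G.Adj v u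

/-- A vertex `v` is isolatable if some independent set `I` leaves `v` isolated in `G - N[I]`. -/
def Isolatable {V : Type*} (G : SimpleGraph V) (v : V) : Prop :=
  ∃ I : Set V, IsIndep G I ∧ v ∉ closedNbhd G I ∧ ∀ u ∉ closedNbhd G I, ¬ G.Adj v u


/-!
Fix a vertex `v` of `G`, a maximal independent set `B` of `H` and a maximum independent set `A`
of `G`. Then `V × B`, `A × W` and `{v} × W ∪ (V ∖ N[v]) × B` are maximal independent sets of
`G × H`; for the last one, a vertex outside `N[v]` with no neighbour outside `N[v]` would be
isolatable. Comparing their sizes `n(G) β`, `α n(H)` and `n(H) + (n(G) - deg v - 1) β` gives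
`n(G) = α (deg v + 1)`.
-/

open Set

section Independence

variable {V : Type*} (G : SimpleGraph V)

lemma closedNbhd_singleton (v : V) : closedNbhd G {v} = insert v (G.neighborSet v) := by
  ext x
  simp [closedNbhd, eq_comm]

lemma isIndep_singleton (v : V) : IsIndep G {v} := by
  rintro _ rfl _ rfl
  exact G.loopless.irrefl _

variable {G}

lemma isIndep_empty : IsIndep G ∅ := fun _ hu => absurd hu (notMem_empty _)

lemma Maximal.isMaxIndep {s : Set V} (h : Maximal (IsIndep G) s) : IsMaxIndep G s :=
  ⟨h.prop, fun _ ht hst => h.eq_of_subset ht hst⟩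

lemma IsIndep.isMaxIndep_of_forall_adj {s : Set V} (hs : IsIndep G s)
    (hdom : ∀ x ∉ s, ∃ y ∈ s, G.Adj x y) : IsMaxIndep G s := by
  refine ⟨hs, fun t ht hst => hst.antisymm fun x hxt => ?_⟩
  by_contra hxs
  obtain ⟨y, hy, hxy⟩ := hdom x hxs
  exact ht hxt (hst hy) hxy

lemma IsMaxIndep.exists_adj_of_notMem {s : Set V} (hs : IsMaxIndep G s) {x : V} (hx : x ∉ s) :
    ∃ y ∈ s, G.Adj x y := by
  by_contra! h
  have hins : IsIndep G (insert x s) := by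
    rintro u (rfl | hu) w (rfl | hw) huw
    · exact G.loopless.irrefl _ huw
    · exact h w hw huw
    · exact h u hu huw.symm
    · exact hs.1 hu hw huw
  exact hx (hs.2 _ hins (subset_insert x s) ▸ mem_insert x s)

lemma exists_isMaxIndep [Finite V] : ∃ s, IsMaxIndep G s :=
  let ⟨s, _, hs⟩ := Finite.exists_le_maximal (isIndep_empty (G := G))
  ⟨s, hs.isMaxIndep⟩

lemma bddAbove_ncard_isIndep [Finite V] : BddAbove {n | ∃ s, IsIndep G s ∧ s.ncard = n} :=
  ⟨Nat.card V, by rintro _ ⟨t, -, rfl⟩; exact ncard_le_card t⟩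

lemma IsIndep.ncard_le_indepNum [Finite V] {s : Set V} (hs : IsIndep G s) :
    s.ncard ≤ indepNum G :=
  le_csSup bddAbove_ncard_isIndep ⟨s, hs, rfl⟩

lemma exists_isMaxIndep_ncard_eq_indepNum [Finite V] :
    ∃ s, IsMaxIndep G s ∧ s.ncard = indepNum G := by
  obtain ⟨s, hs, hcard⟩ : indepNum G ∈ {n | ∃ s, IsIndep G s ∧ s.ncard = n} :=
    Nat.sSup_mem ⟨0, ∅, isIndep_empty, ncard_empty V⟩ bddAbove_ncard_isIndep
  refine ⟨s, ⟨hs, fun t ht hst => ?_⟩, hcard⟩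
  exact eq_of_subset_of_ncard_le hst (hcard ▸ ht.ncard_le_indepNum) (toFinite t)

lemma indepNum_pos [Finite V] [Nonempty V] : 0 < indepNum G :=
  let ⟨v⟩ := ‹Nonempty V›
  (ncard_singleton v).symm.trans_le (isIndep_singleton G v).ncard_le_indepNum

lemma exists_adj_compl_closedNbhd_of_not_isolatable {x : V} (hx : ¬ Isolatable G x)
    {I : Set V} (hI : IsIndep G I) (hxI : x ∉ closedNbhd G I) :
    ∃ u ∉ closedNbhd G I, G.Adj x u := by
  by_contra! h
  exact hx ⟨I, hI, hxI, h⟩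

lemma noIsolated_of_forall_not_isolatable (hG : ∀ v, ¬ Isolatable G v) : NoIsolated G := by
  intro v
  obtain ⟨u, -, hvu⟩ :=
    exists_adj_compl_closedNbhd_of_not_isolatable (hG v) isIndep_empty (by simp [closedNbhd])
  exact ⟨u, hvu⟩

end Independence

section DirectProd

variable {V W : Type*} {G : SimpleGraph V} {H : SimpleGraph W}

lemma isMaxIndep_univ_prod (hG : NoIsolated G) {B : Set W} (hB : IsMaxIndep H B) :
    IsMaxIndep (directProd G H) (univ ×ˢ B) := by
  refine IsIndep.isMaxIndep_of_forall_adj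
    (fun x hx y hy hxy => hB.1 hx.2 hy.2 hxy.2) fun ⟨x, y⟩ hxy => ?_
  obtain ⟨b, hb, hyb⟩ := hB.exists_adj_of_notMem fun hy => hxy ⟨mem_univ x, hy⟩
  obtain ⟨x', hxx'⟩ := hG x
  exact ⟨(x', b), ⟨mem_univ x', hb⟩, hxx', hyb⟩

lemma isMaxIndep_prod_univ (hH : NoIsolated H) {A : Set V} (hA : IsMaxIndep G A) :
    IsMaxIndep (directProd G H) (A ×ˢ univ) := by
  refine IsIndep.isMaxIndep_of_forall_adj
    (fun x hx y hy hxy => hA.1 hx.1 hy.1 hxy.1) fun ⟨x, y⟩ hxy => ?_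
  obtain ⟨a, ha, hxa⟩ := hA.exists_adj_of_notMem fun hx => hxy ⟨hx, mem_univ y⟩
  obtain ⟨y', hyy'⟩ := hH y
  exact ⟨(a, y'), ⟨ha, mem_univ y'⟩, hxa, hyy'⟩

lemma isMaxIndep_singleton_prod_univ_union (hG : ∀ v, ¬ Isolatable G v) (hH : NoIsolated H)
    (v : V) {B : Set W} (hB : IsMaxIndep H B) :
    IsMaxIndep (directProd G H) ({v} ×ˢ univ ∪ (closedNbhd G {v})ᶜ ×ˢ B) := by
  have hN : ∀ {x}, x ∈ closedNbhd G {v} ↔ x = v ∨ G.Adj v x := by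
    intro x; simp [closedNbhd_singleton]
  refine IsIndep.isMaxIndep_of_forall_adj ?_ fun ⟨x, y⟩ hxy => ?_
  · rintro ⟨x, y⟩ (⟨rfl, -⟩ | ⟨hx, hy⟩) ⟨x', y'⟩ (⟨rfl, -⟩ | ⟨hx', hy'⟩) ⟨hxx', hyy'⟩
    · exact G.loopless.irrefl _ hxx'
    · exact hx' (hN.2 (Or.inr hxx'))
    · exact hx (hN.2 (Or.inr hxx'.symm))
    · exact hB.1 hy hy' hyy'
  simp only [mem_union, mem_prod, mem_singleton_iff, mem_univ, and_true, mem_compl_iff,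
    not_or, not_and] at hxy
  obtain ⟨hxv, hxB⟩ := hxy
  by_cases hx : x ∈ closedNbhd G {v}
  · obtain ⟨y', hyy'⟩ := hH y
    exact ⟨(v, y'), Or.inl ⟨rfl, mem_univ y'⟩, ((hN.1 hx).resolve_left hxv).symm, hyy'⟩
  · obtain ⟨b, hb, hyb⟩ := hB.exists_adj_of_notMem (hxB hx)
    obtain ⟨u, hu, hxu⟩ :=
      exists_adj_compl_closedNbhd_of_not_isolatable (hG x) (isIndep_singleton G v) hx
    exact ⟨(u, b), Or.inr ⟨hu, hb⟩, hxu, hyb⟩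

end DirectProd

theorem card_eq_indepNum_mul_ncard_neighborSet_add_one {V W : Type*} [Fintype V] [Fintype W]
    [Nonempty W] {G : SimpleGraph V} {H : SimpleGraph W} (hG : ∀ v, ¬ Isolatable G v)
    (hH : NoIsolated H) (hwc : WellCovered (directProd G H)) (v : V) :
    Fintype.card V = indepNum G * ((G.neighborSet v).ncard + 1) := by
  obtain ⟨B, hB⟩ := exists_isMaxIndep (G := H)
  obtain ⟨A, hA, hAcard⟩ := exists_isMaxIndep_ncard_eq_indepNum (G := G)
  have h₁ := isMaxIndep_univ_prod (noIsolated_of_forall_not_isolatable hG) hB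
  have h₂ := isMaxIndep_prod_univ hH hA
  have h₃ := isMaxIndep_singleton_prod_univ_union hG hH v hB
  have hdisj : Disjoint ({v} ×ˢ (univ : Set W)) ((closedNbhd G {v})ᶜ ×ˢ B) :=
    disjoint_prod.2 (Or.inl (disjoint_compl_right_iff_subset.2 (by simp [closedNbhd])))
  have hN : (closedNbhd G {v}).ncard + ((closedNbhd G {v})ᶜ).ncard = Fintype.card V := by
    rw [ncard_add_ncard_compl, Nat.card_eq_fintype_card]
  have hNv : (closedNbhd G {v}).ncard = (G.neighborSet v).ncard + 1 := by
    rw [closedNbhd_singleton, ncard_insert_of_notMem G.notMem_neighborSet_self]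
  have e₁₂ := hwc _ _ h₁ h₂
  have e₃₂ := hwc _ _ h₃ h₂
  rw [ncard_union_eq hdisj] at e₃₂
  simp only [ncard_prod, ncard_univ, ncard_singleton, Nat.card_eq_fintype_card, hAcard] at e₁₂ e₃₂
  have hW : 0 < Fintype.card W := Fintype.card_pos
  apply Nat.eq_of_mul_eq_mul_right hW
  zify at e₁₂ e₃₂ hN hNv ⊢
  linear_combination (Fintype.card V : ℤ) * e₃₂ - ((closedNbhd G {v})ᶜ.ncard : ℤ) * e₁₂
    + (indepNum G * Fintype.card W : ℤ) * (hNv - hN)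

theorem stmt14_general {V W : Type*} [Fintype V] [Fintype W] (G : SimpleGraph V) (H : SimpleGraph W)
    (hHconn : H.Connected) (hHnt : 1 < Fintype.card W)
    (hGiso : ∀ v, ¬ Isolatable G v)
    (hwc : WellCovered (directProd G H)) :
    ∀ v : V, ((G.neighborSet v).ncard : ℚ) = (Fintype.card V : ℚ) / indepNum G - 1 := by
  intro v
  have : Nontrivial W := Fintype.one_lt_card_iff_nontrivial.1 hHnt
  have hcard := card_eq_indepNum_mul_ncard_neighborSet_add_one hGiso
    hHconn.preconnected.exists_adj_of_nontrivial hwc v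
  have hα : (indepNum G : ℚ) ≠ 0 := by
    have : Nonempty V := ⟨v⟩
    exact_mod_cast indepNum_pos.ne'
  rw [hcard, Nat.cast_mul, mul_div_cancel_left₀ _ hα]
  push_cast
  ring

theorem stmt14 {V W : Type*} [Fintype V] [Fintype W] (G : SimpleGraph V) (H : SimpleGraph W)
    (hGconn : G.Connected) (hGnt : 1 < Fintype.card V)
    (hHconn : H.Connected) (hHnt : 1 < Fintype.card W)
    (hGiso : ∀ v, ¬ Isolatable G v)
    (hwc : WellCovered (directProd G H)) :
    ∀ v : V, ((G.neighborSet v).ncard : ℚ) = (Fintype.card V : ℚ) / indepNum G - 1 :=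
  stmt14_general G H hHconn hHnt hGiso hwc
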